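/- Let s : {0, 1, ..., n} → ℤ be a walk with s(0) = 0, |s(j+1) − s(j)| = 1, 0 ≤ s(j) ≤ L for all j, and s(n) = 0, with n ≥ 2. Remove the first up-step (first index where s increases) and the first down-step (first index where s decreases) from the step sequence. Then the resulting sequence of n − 2 steps, started at 0, again has all partial sums in [0, L] and final sum 0. -/

import Mathlib

/-!
Steps `p` and `q` point in opposite directions, so `p ≠ q`. Since `max p q` is the first step in
its direction, every step before it repeats step `min p q`. Deleting these two opposite steps
therefore leaves the walk unchanged before time `max p q` and shifts it by two indices from then
on: the new walk at time `m` is `s m` or `s (m + 2)`, hence stays in `[0, L]` and ends at `s n = 0`.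
-/

open Finset

/-- The step sequence of `s` with its steps `a` and `b` deleted (`a < b`); the steps of `s` after
`b` are shifted down by two, those strictly between `a` and `b` by one. -/
def deleteTwoSteps (s : ℕ → ℤ) (a b j : ℕ) : ℤ :=
  if j < a then s (j + 1) - s j
  else if j < b - 1 then s (j + 2) - s (j + 1)
  else s (j + 3) - s (j + 2)

section deleteTwoSteps

variable {s : ℕ → ℤ} {a b : ℕ}

theorem sum_range_deleteTwoSteps (hab : a < b) (m : ℕ) :
    ∑ j ∈ range m, deleteTwoSteps s a b j =
      if m ≤ a then s m - s 0
      else if m < b then s (m + 1) - s 0 - (s (a + 1) - s a)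
      else s (m + 2) - s 0 - (s (a + 1) - s a) - (s (b + 1) - s b) := by
  induction m with
  | zero => simp
  | succ m ih =>
    rw [sum_range_succ, ih, deleteTwoSteps]
    obtain hm | rfl | hm := lt_trichotomy m a <;>
    obtain hb | rfl | hb := lt_trichotomy (m + 1) b <;>
    split_ifs <;> first | omega | ring

theorem sum_range_deleteTwoSteps_of_balanced (hab : a < b)
    (hcancel : s (b + 1) - s b = -(s (a + 1) - s a))
    (hconst : ∀ j, a ≤ j → j < b → s (j + 1) - s j = s (a + 1) - s a) (m : ℕ) :
    ∑ j ∈ range m, deleteTwoSteps s a b j = (if m < b then s m else s (m + 2)) - s 0 := by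
  rw [sum_range_deleteTwoSteps hab]
  by_cases hma : m ≤ a
  · simp only [hma, lt_of_le_of_lt hma hab, ↓reduceIte]
  by_cases hmb : m < b
  · have := hconst m (by omega) hmb
    simp only [hma, hmb, ↓reduceIte]
    linarith
  · simp only [hma, hmb, ↓reduceIte]
    linarith

theorem sum_range_deleteTwoSteps_of_le_succ (hab : a < b)
    (hcancel : s (b + 1) - s b = -(s (a + 1) - s a))
    (hconst : ∀ j, a ≤ j → j < b → s (j + 1) - s j = s (a + 1) - s a) {m : ℕ} (hm : b ≤ m + 1) :
    ∑ j ∈ range m, deleteTwoSteps s a b j = s (m + 2) - s 0 := by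
  rw [sum_range_deleteTwoSteps_of_balanced hab hcancel hconst]
  split_ifs with hmb
  · obtain rfl : b = m + 1 := by omega
    have := hconst m (by omega) (by omega)
    linarith
  · rfl

end deleteTwoSteps

theorem deleteTwoSteps_walk {n L a b : ℕ} {s : ℕ → ℤ} (h0 : s 0 = 0) (hend : s n = 0)
    (hbound : ∀ j ≤ n, 0 ≤ s j ∧ s j ≤ (L : ℤ)) (hab : a < b) (hbn : b < n)
    (hcancel : s (b + 1) - s b = -(s (a + 1) - s a))
    (hconst : ∀ j, a ≤ j → j < b → s (j + 1) - s j = s (a + 1) - s a) :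
    (∀ m ≤ n - 2, 0 ≤ ∑ j ∈ range m, deleteTwoSteps s a b j ∧
        ∑ j ∈ range m, deleteTwoSteps s a b j ≤ (L : ℤ)) ∧
      ∑ j ∈ range (n - 2), deleteTwoSteps s a b j = 0 := by
  refine ⟨fun m hm => ?_, ?_⟩
  · rw [sum_range_deleteTwoSteps_of_balanced hab hcancel hconst, h0, sub_zero]
    split_ifs
    · exact hbound m (by omega)
    · exact hbound (m + 2) (by omega)
  · rw [sum_range_deleteTwoSteps_of_le_succ hab hcancel hconst (by omega),
      show n - 2 + 2 = n by omega, h0, hend, sub_zero]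

theorem step_eq_of_lt_first_opposite {n a b : ℕ} {s : ℕ → ℤ}
    (hstep : ∀ j < n, |s (j + 1) - s j| = 1) (hbn : b < n)
    (hfirst : ∀ j < b, s (j + 1) - s j ≠ -(s (a + 1) - s a)) :
    ∀ j, a ≤ j → j < b → s (j + 1) - s j = s (a + 1) - s a := by
  intro j haj hjb
  have hsame : |s (j + 1) - s j| = |s (a + 1) - s a| := by
    rw [hstep j (by omega), hstep a (by omega)]
  exact (abs_eq_abs.mp hsame).resolve_right (hfirst j hjb)

theorem stmt_15_general (n L : ℕ) (s : ℕ → ℤ) (p q : ℕ)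
    (h0 : s 0 = 0) (hend : s n = 0)
    (hstep : ∀ j < n, |s (j + 1) - s j| = 1)
    (hbound : ∀ j ≤ n, 0 ≤ s j ∧ s j ≤ (L : ℤ))
    (hp : p < n ∧ s (p + 1) - s p = 1 ∧ ∀ j < p, s (j + 1) - s j ≠ 1)
    (hq : q < n ∧ s (q + 1) - s q = -1 ∧ ∀ j < q, s (j + 1) - s j ≠ -1) :
    -- the remaining step sequence, obtained by deleting steps p and q
    (∀ m ≤ n - 2,
        0 ≤ ∑ j ∈ Finset.range m,
              (if j < min p q then s (j + 1) - s j
               else if j < max p q - 1 then s (j + 2) - s (j + 1)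
               else s (j + 3) - s (j + 2)) ∧
        ∑ j ∈ Finset.range m,
              (if j < min p q then s (j + 1) - s j
               else if j < max p q - 1 then s (j + 2) - s (j + 1)
               else s (j + 3) - s (j + 2)) ≤ (L : ℤ)) ∧
    ∑ j ∈ Finset.range (n - 2),
        (if j < min p q then s (j + 1) - s j
         else if j < max p q - 1 then s (j + 2) - s (j + 1)
         else s (j + 3) - s (j + 2)) = 0 := by
  obtain ⟨hpn, hp_up, hp_first⟩ := hp
  obtain ⟨hqn, hq_down, hq_first⟩ := hq
  obtain hpq | rfl | hqp := lt_trichotomy p q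
  · rw [min_eq_left hpq.le, max_eq_right hpq.le]
    refine deleteTwoSteps_walk h0 hend hbound hpq hqn (by rw [hp_up, hq_down]) ?_
    exact step_eq_of_lt_first_opposite hstep hqn (by rwa [hp_up])
  · linarith
  · rw [min_eq_right hqp.le, max_eq_left hqp.le]
    refine deleteTwoSteps_walk h0 hend hbound hqp hpn (by rw [hp_up, hq_down, neg_neg]) ?_
    exact step_eq_of_lt_first_opposite hstep hpn (by rwa [hq_down, neg_neg])

/-- Removing the first up-step and the first down-step from a walk with ±1
steps, values in [0, L], start and end at 0, yields again a step sequence all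
of whose partial sums lie in [0, L] and whose total sum is 0. -/
theorem stmt_15 (n L : ℕ) (s : ℕ → ℤ) (p q : ℕ)
    (hn : 2 ≤ n) (h0 : s 0 = 0) (hend : s n = 0)
    (hstep : ∀ j < n, |s (j + 1) - s j| = 1)
    (hbound : ∀ j ≤ n, 0 ≤ s j ∧ s j ≤ (L : ℤ))
    (hp : p < n ∧ s (p + 1) - s p = 1 ∧ ∀ j < p, s (j + 1) - s j ≠ 1)
    (hq : q < n ∧ s (q + 1) - s q = -1 ∧ ∀ j < q, s (j + 1) - s j ≠ -1) :
    -- the remaining step sequence, obtained by deleting steps p and q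
    (∀ m ≤ n - 2,
        0 ≤ ∑ j ∈ Finset.range m,
              (if j < min p q then s (j + 1) - s j
               else if j < max p q - 1 then s (j + 2) - s (j + 1)
               else s (j + 3) - s (j + 2)) ∧
        ∑ j ∈ Finset.range m,
              (if j < min p q then s (j + 1) - s j
               else if j < max p q - 1 then s (j + 2) - s (j + 1)
               else s (j + 3) - s (j + 2)) ≤ (L : ℤ)) ∧
    ∑ j ∈ Finset.range (n - 2),
        (if j < min p q then s (j + 1) - s j
         else if j < max p q - 1 then s (j + 2) - s (j + 1)
         else s (j + 3) - s (j + 2)) = 0 :=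
  stmt_15_general n L s p q h0 hend hstep hbound hp hq
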